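/- For all 0 ≤ k ≤ n, D(n,k) − D̃(n,k) = (−1)^k · C(n,k), where C(n,k) is the binomial coefficient (this is an identity of integers). -/

import Mathlib

open MeasureTheory Finset

/-- Number of descents of a finite sequence given as a list. -/
def descCount {α : Type*} [LT α] [DecidableRel ((· < ·) : α → α → Prop)] : List α → ℕ
  | a :: b :: rest => (if b < a then 1 else 0) + descCount (b :: rest)
  | _ => 0

/-- Type A Eulerian number: permutations of {1,…,n} with k descents. -/
def eulerianA (n k : ℕ) : ℕ :=
  Fintype.card {σ : Equiv.Perm (Fin n) // descCount (List.ofFn fun i => σ i) = k}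

/-- Eulerian polynomial of type A. -/
noncomputable def polyA (n : ℕ) (t : ℝ) : ℝ :=
  ∑ k ∈ Finset.range (n + 1), (eulerianA n k : ℝ) * t ^ k

/-- The underlying set {-n, …, -1, 0, 1, …, n}. -/
abbrev BSet (n : ℕ) : Type := {x : ℤ // x ∈ Finset.Icc (-(n : ℤ)) (n : ℤ)}

def negB {n : ℕ} (x : BSet n) : BSet n :=
  ⟨-x.1, by have := x.2; simp only [Finset.mem_Icc] at *; omega⟩

def posB {n : ℕ} (i : Fin n) : BSet n :=
  ⟨((i : ℕ) : ℤ) + 1, by have := i.isLt; simp only [Finset.mem_Icc]; omega⟩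

/-- A permutation of {-n,…,n} is a signed permutation if σ(-k) = -σ(k). -/
def IsSigned {n : ℕ} (σ : Equiv.Perm (BSet n)) : Prop :=
  ∀ x : BSet n, (σ (negB x)).1 = -((σ x).1)

noncomputable instance {n : ℕ} (σ : Equiv.Perm (BSet n)) : Decidable (IsSigned σ) :=
  inferInstanceAs (Decidable (∀ x : BSet n, (σ (negB x)).1 = -((σ x).1)))

/-- Number of descents of the sequence (0, σ(1), …, σ(n)). -/
def descB {n : ℕ} (σ : Equiv.Perm (BSet n)) : ℕ :=
  descCount ((0 : ℤ) :: List.ofFn fun i : Fin n => (σ (posB i)).1)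

/-- Number of negative terms among σ(1), …, σ(n). -/
def negCount {n : ℕ} (σ : Equiv.Perm (BSet n)) : ℕ :=
  (Finset.univ.filter fun i : Fin n => (σ (posB i)).1 < 0).card

/-- Type B Eulerian number. -/
noncomputable def eulerianB (n k : ℕ) : ℕ :=
  Fintype.card {σ : Equiv.Perm (BSet n) // IsSigned σ ∧ descB σ = k}

/-- Primary type D Eulerian number. -/
noncomputable def eulerianD (n k : ℕ) : ℕ :=
  Fintype.card {σ : Equiv.Perm (BSet n) //
    (IsSigned σ ∧ Even (negCount σ)) ∧ descB σ = k}

/-- Complementary type D Eulerian number. -/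
noncomputable def eulerianDt (n k : ℕ) : ℕ :=
  Fintype.card {σ : Equiv.Perm (BSet n) //
    (IsSigned σ ∧ ¬ Even (negCount σ)) ∧ descB σ = k}

noncomputable def polyB (n : ℕ) (t : ℝ) : ℝ :=
  ∑ k ∈ Finset.range (n + 1), (eulerianB n k : ℝ) * t ^ k

noncomputable def polyD (n : ℕ) (t : ℝ) : ℝ :=
  ∑ k ∈ Finset.range (n + 1), (eulerianD n k : ℝ) * t ^ k

noncomputable def polyDt (n : ℕ) (t : ℝ) : ℝ :=
  ∑ k ∈ Finset.range (n + 1), (eulerianDt n k : ℝ) * t ^ k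

/-!
`D(n,k) - D̃(n,k)` is the signed count `∑ (-1) ^ negCount σ` over the signed permutations `σ`
with `k` descents. If the absolute values `|σ(1)|, …, |σ(n)|` are not `1, …, n`, there is a first
position `j` with `|σ(j)| > |σ(j+1)|`; then `|σ(j)|` exceeds both of its neighbours in
`(0, σ(1), …, σ(n))`, so negating `σ(j)` keeps every descent while changing the number of negative
entries by one. This sign-reversing involution cancels all such `σ`. The remaining `σ` satisfy
`|σ(i)| = i`, are determined by their set of negative entries, and have exactly one descent per
negative entry, so they contribute `(-1) ^ k * C(n, k)`.
-/

theorem descCount_eq_sum_getD {α : Type*} [LinearOrder α] (l : List α) (d : α) :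
    descCount l = ∑ i ∈ range (l.length - 1), if l.getD (i + 1) d < l.getD i d then 1 else 0 := by
  induction l with
  | nil => rfl
  | cons a l ih =>
    cases l with
    | nil => rfl
    | cons b r =>
      simp only [descCount, ih, List.length_cons, Nat.add_sub_cancel]
      rw [sum_range_succ' _ r.length, add_comm]
      simp

theorem sum_ite_lt_update_neg_of_abs_lt {α : Type*} [AddCommGroup α] [LinearOrder α]
    [IsOrderedAddMonoid α] (g : ℕ → α) {m p : ℕ} (hpm : p + 1 < m)
    (hl : |g p| < |g (p + 1)|) (hr : |g (p + 2)| < |g (p + 1)|) :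
    (∑ i ∈ range m, if Function.update g (p + 1) (-g (p + 1)) (i + 1) <
        Function.update g (p + 1) (-g (p + 1)) i then 1 else 0) =
      ∑ i ∈ range m, if g (i + 1) < g i then 1 else 0 := by
  set g' := Function.update g (p + 1) (-g (p + 1))
  have hg' : ∀ i, i ≠ p + 1 → g' i = g i := fun i hi => Function.update_of_ne hi _ _
  have split : ∀ f : ℕ → ℕ, ∑ i ∈ range m, f i =
      ∑ i ∈ range p, f i + (f p + f (p + 1)) + ∑ i ∈ Ico (p + 2) m, f i := fun f => by
    rw [← sum_range_add_sum_Ico _ (show p + 2 ≤ m by omega), sum_range_succ, sum_range_succ,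
      add_assoc (∑ i ∈ range p, f i)]
  rw [split, split]
  congr 1
  congr 1
  · refine sum_congr rfl fun i hi => ?_
    rw [mem_range] at hi
    rw [hg' i (by omega), hg' (i + 1) (by omega)]
  · -- negating the peak swaps which of its two comparisons is a descent
    have hflip : g' (p + 1) = -g (p + 1) := Function.update_self ..
    rw [hg' p (by omega), hg' (p + 2) (by omega), hflip]
    rw [abs_lt] at hl hr
    rcases le_or_gt 0 (g (p + 1)) with hb | hb
    · rw [abs_of_nonneg hb] at hl hr
      rw [if_pos hl.1, if_neg (not_lt.2 hr.1.le), if_neg (not_lt.2 hl.2.le), if_pos hr.2]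
    · rw [abs_of_neg hb, neg_neg] at hl hr
      rw [if_neg (not_lt.2 hl.2.le), if_pos hr.2, if_pos hl.1, if_neg (not_lt.2 hr.1.le)]
  · refine sum_congr rfl fun i hi => ?_
    rw [mem_Ico] at hi
    rw [hg' i (by omega), hg' (i + 1) (by omega)]

theorem sum_neg_one_pow_eq_card_filter_even_sub {β : Type*} (s : Finset β) (f : β → ℕ) :
    ∑ x ∈ s, (-1 : ℤ) ^ f x = #{x ∈ s | Even (f x)} - #{x ∈ s | ¬Even (f x)} := by
  rw [← sum_filter_add_sum_filter_not s (fun x => Even (f x)),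
    sum_congr rfl fun x hx => (mem_filter.1 hx).2.neg_one_pow,
    sum_congr rfl fun x hx => (Nat.not_even_iff_odd.1 (mem_filter.1 hx).2).neg_one_pow]
  simp [sub_eq_add_neg]

theorem neg_one_pow_card_filter_update_neg {ι α : Type*} [Fintype ι] [DecidableEq ι]
    [AddCommGroup α] [LinearOrder α] [IsOrderedAddMonoid α] (w : ι → α) {j : ι} (hj : w j ≠ 0) :
    (-1 : ℤ) ^ #{i | Function.update w j (-w j) i < 0} = -(-1) ^ #{i | w i < 0} := by
  have split : ∀ v : ι → α, #{i | v i < 0} =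
      (if v j < 0 then 1 else 0) + ∑ i ∈ univ.erase j, if v i < 0 then 1 else 0 := fun v => by
    rw [card_filter]; exact (add_sum_erase _ _ (mem_univ j)).symm
  rw [split, split, sum_congr rfl fun i hi => by rw [Function.update_of_ne (ne_of_mem_erase hi)],
    Function.update_self]
  rcases hj.lt_or_gt with hneg | hpos
  · rw [if_neg (not_lt.2 (neg_nonneg.2 hneg.le)), if_pos hneg]
    ring
  · rw [if_pos (neg_lt_zero.2 hpos), if_neg (not_lt.2 hpos.le)]
    ring

theorem add_one_le_of_pos_of_lt_succ {f : ℕ → ℤ} {n : ℕ} (hpos : ∀ i < n, 1 ≤ f i)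
    (hmono : ∀ i, i + 1 < n → f i < f (i + 1)) : ∀ i < n, (i : ℤ) + 1 ≤ f i := by
  intro i hi
  induction i with
  | zero => simpa using hpos 0 hi
  | succ i ih =>
    have := hmono i hi
    push_cast
    linarith [ih (by omega)]

theorem eq_add_one_of_mem_Icc_of_lt_succ {f : ℕ → ℤ} {n : ℕ} (hf : ∀ i < n, 1 ≤ f i ∧ f i ≤ n)
    (hmono : ∀ i, i + 1 < n → f i < f (i + 1)) : ∀ i < n, f i = i + 1 := by
  have lower := add_one_le_of_pos_of_lt_succ (fun i hi => (hf i hi).1) hmono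
  -- the same bound for the reversed sequence `n + 1 - f (n - 1 - i)` is the upper bound
  have upper := add_one_le_of_pos_of_lt_succ (f := fun i => n + 1 - f (n - 1 - i)) (n := n)
    (fun i hi => by linarith [(hf (n - 1 - i) (by omega)).2])
    (fun i hi => by
      have := hmono (n - 1 - (i + 1)) (by omega)
      rw [show n - 1 - (i + 1) + 1 = n - 1 - i by omega] at this
      linarith)
  intro i hi
  have := upper (n - 1 - i) (by omega)
  simp only [show n - 1 - (n - 1 - i) = i by omega] at this
  have := lower i hi
  omega

section Words

variable {n : ℕ}

def zeroCons (w : Fin n → ℤ) (i : ℕ) : ℤ := ((0 : ℤ) :: List.ofFn w).getD i 0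

@[simp]
theorem zeroCons_zero (w : Fin n → ℤ) : zeroCons w 0 = 0 := rfl

theorem zeroCons_succ_of_lt (w : Fin n → ℤ) {i : ℕ} (hi : i < n) :
    zeroCons w (i + 1) = w ⟨i, hi⟩ := by
  simp [zeroCons, List.getD_eq_getElem?_getD, hi]

@[simp]
theorem zeroCons_succ (w : Fin n → ℤ) (i : Fin n) : zeroCons w (i + 1) = w i :=
  zeroCons_succ_of_lt w i.isLt

theorem zeroCons_eq_zero_of_lt (w : Fin n → ℤ) {i : ℕ} (hi : n < i) : zeroCons w i = 0 :=
  List.getD_eq_default _ _ (by simpa using hi)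

theorem zeroCons_update (w : Fin n → ℤ) (j : Fin n) (x : ℤ) :
    zeroCons (Function.update w j x) = Function.update (zeroCons w) (j + 1) x := by
  funext i
  rcases i with _ | i
  · simp
  · rcases lt_or_ge i n with hi | hi
    · simp [zeroCons_succ_of_lt _ hi, Function.update_apply, Fin.ext_iff]
    · rw [zeroCons_eq_zero_of_lt _ (by omega), Function.update_of_ne (by omega),
        zeroCons_eq_zero_of_lt _ (by omega)]

theorem abs_zeroCons_congr {v w : Fin n → ℤ} (h : ∀ i, |v i| = |w i|) (i : ℕ) :
    |zeroCons v i| = |zeroCons w i| := by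
  rcases i with _ | i
  · simp
  · rcases lt_or_ge i n with hi | hi
    · rw [zeroCons_succ_of_lt _ hi, zeroCons_succ_of_lt _ hi, h]
    · rw [zeroCons_eq_zero_of_lt _ (by omega), zeroCons_eq_zero_of_lt _ (by omega)]

theorem descCount_zero_cons_ofFn (w : Fin n → ℤ) :
    descCount (0 :: List.ofFn w) =
      ∑ i ∈ range n, if zeroCons w (i + 1) < zeroCons w i then 1 else 0 := by
  rw [descCount_eq_sum_getD _ 0]
  simp [zeroCons]

def absDescents (w : Fin n → ℤ) : Finset (Fin n) :=
  {j | j.1 + 1 < n ∧ |zeroCons w (j + 2)| < |zeroCons w (j + 1)|}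

theorem absDescents_congr {v w : Fin n → ℤ} (h : ∀ i, |v i| = |w i|) :
    absDescents v = absDescents w := by
  simp only [absDescents, abs_zeroCons_congr h]

variable {w : Fin n → ℤ}

theorem mem_absDescents {j : Fin n} :
    j ∈ absDescents w ↔ ∃ h : j.1 + 1 < n, |w ⟨j + 1, h⟩| < |w j| := by
  simp only [absDescents, mem_filter, mem_univ, true_and, show (j : ℕ) + 2 = j + 1 + 1 from rfl]
  constructor
  · rintro ⟨h, hlt⟩
    exact ⟨h, by rwa [zeroCons_succ_of_lt w h, zeroCons_succ] at hlt⟩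
  · rintro ⟨h, hlt⟩
    exact ⟨h, by rwa [zeroCons_succ_of_lt w h, zeroCons_succ]⟩

theorem abs_lt_abs_succ_of_notMem_absDescents (hinj : Function.Injective fun i => |w i|)
    {i : ℕ} (h : i + 1 < n) (hi : ⟨i, by omega⟩ ∉ absDescents w) :
    |w ⟨i, by omega⟩| < |w ⟨i + 1, h⟩| := by
  simp only [mem_absDescents, not_exists, not_lt] at hi
  exact lt_of_le_of_ne (hi h) fun heq => by simpa using hinj heq

theorem abs_zeroCons_lt_of_forall_lt_notMem_absDescents (hw : ∀ i, w i ≠ 0)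
    (hinj : Function.Injective fun i => |w i|) {j : Fin n}
    (hj : ∀ i < j, i ∉ absDescents w) : |zeroCons w j| < |w j| := by
  rcases j with ⟨_ | p, hp⟩
  · simpa using hw _
  · rw [zeroCons_succ_of_lt w (by omega)]
    exact abs_lt_abs_succ_of_notMem_absDescents hinj hp (hj _ (Fin.mk_lt_mk.2 p.lt_succ_self))

theorem descCount_update_neg_of_mem_absDescents (hw : ∀ i, w i ≠ 0)
    (hinj : Function.Injective fun i => |w i|) {j : Fin n} (hmem : j ∈ absDescents w)
    (hj : ∀ i < j, i ∉ absDescents w) :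
    descCount (0 :: List.ofFn (Function.update w j (-w j))) = descCount (0 :: List.ofFn w) := by
  obtain ⟨hjn, hdesc⟩ := (mem_filter.1 hmem).2
  have hpeak := abs_zeroCons_lt_of_forall_lt_notMem_absDescents hw hinj hj
  rw [← zeroCons_succ w j] at hpeak
  rw [descCount_zero_cons_ofFn, descCount_zero_cons_ofFn, zeroCons_update, ← zeroCons_succ w j]
  exact sum_ite_lt_update_neg_of_abs_lt _ hjn hpeak hdesc

theorem absDescents_eq_empty_iff (hw : ∀ i, w i ≠ 0) (hle : ∀ i, |w i| ≤ n)
    (hinj : Function.Injective fun i => |w i|) :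
    absDescents w = ∅ ↔ ∀ i : Fin n, |w i| = i + 1 := by
  constructor
  · intro hempty i
    have key := eq_add_one_of_mem_Icc_of_lt_succ (f := fun i => |zeroCons w (i + 1)|) (n := n)
      (fun i hi => by
        rw [zeroCons_succ_of_lt w hi]
        exact ⟨Int.one_le_abs (hw _), hle _⟩)
      (fun i hi => by
        rw [zeroCons_succ_of_lt w (by omega), zeroCons_succ_of_lt w hi]
        exact abs_lt_abs_succ_of_notMem_absDescents hinj hi (by simp [hempty]))
    simpa using key i i.isLt
  · intro habs
    refine eq_empty_of_forall_notMem fun j hj => ?_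
    obtain ⟨h, hlt⟩ := mem_absDescents.1 hj
    rw [habs, habs] at hlt
    push_cast at hlt
    omega

theorem descCount_eq_card_neg (habs : ∀ i : Fin n, |w i| = i + 1) :
    descCount (0 :: List.ofFn w) = #{i | w i < 0} := by
  rw [descCount_zero_cons_ofFn, card_filter, ← Fin.sum_univ_eq_sum_range]
  refine sum_congr rfl fun i _ => ?_
  have hprev : |zeroCons w i| = i := by
    rcases i with ⟨_ | m, hm⟩
    · simp
    · rw [Fin.val_mk, zeroCons_succ_of_lt w (by omega), habs]
      norm_cast
  have hneg : w i < zeroCons w i ↔ w i < 0 := by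
    have hi := habs i
    rcases abs_choice (w i) with h | h <;> rcases abs_choice (zeroCons w i) with h' | h' <;> omega
  simp only [zeroCons_succ, hneg]

end Words

section SignedPerm

variable {n : ℕ}

def permWord (σ : Equiv.Perm (BSet n)) (i : Fin n) : ℤ := (σ (posB i)).1

theorem descB_eq_descCount_permWord (σ : Equiv.Perm (BSet n)) :
    descB σ = descCount (0 :: List.ofFn (permWord σ)) := rfl

theorem negCount_eq_card_permWord_neg (σ : Equiv.Perm (BSet n)) :
    negCount σ = #{i | permWord σ i < 0} := rfl

def negSwap (v : BSet n) : Equiv.Perm (BSet n) := Equiv.swap v (negB v)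

theorem negB_involutive : Function.Involutive (negB (n := n)) := fun _ => Subtype.ext (neg_neg _)

theorem posB_injective : Function.Injective (posB (n := n)) := fun i j h => by
  have := congrArg Subtype.val h
  simp only [posB, add_left_inj, Nat.cast_inj] at this
  exact Fin.ext this

theorem posB_ne_negB_posB (i j : Fin n) : posB i ≠ negB (posB j) := fun h => by
  have := congrArg Subtype.val h
  simp only [posB, negB] at this
  omega

theorem IsSigned.apply_negB {σ : Equiv.Perm (BSet n)} (hσ : IsSigned σ) (x : BSet n) :
    σ (negB x) = negB (σ x) :=
  Subtype.ext (hσ x)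

theorem IsSigned.mul {σ τ : Equiv.Perm (BSet n)} (hσ : IsSigned σ) (hτ : IsSigned τ) :
    IsSigned (σ * τ) := fun x => by
  simp only [Equiv.Perm.mul_apply, hτ.apply_negB, hσ.apply_negB]
  rfl

theorem isSigned_negSwap (v : BSet n) : IsSigned (negSwap v) := fun x => by
  have h := negB_involutive.injective.map_swap v (negB v) x
  rw [negB_involutive v, Equiv.swap_comm (negB v) v] at h
  rw [negSwap, ← h]
  rfl

theorem negSwap_mul_self (v : BSet n) : negSwap v * negSwap v = 1 := Equiv.swap_mul_self _ _

theorem IsSigned.permWord_ne_zero {σ : Equiv.Perm (BSet n)} (hσ : IsSigned σ) (i : Fin n) :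
    permWord σ i ≠ 0 := fun h =>
  posB_ne_negB_posB i i <| σ.injective <| Subtype.ext <| by rw [hσ, ← permWord, h, neg_zero]

theorem abs_permWord_le (σ : Equiv.Perm (BSet n)) (i : Fin n) : |permWord σ i| ≤ n :=
  abs_le.2 (mem_Icc.1 (σ (posB i)).2)

theorem IsSigned.abs_permWord_injective {σ : Equiv.Perm (BSet n)} (hσ : IsSigned σ) :
    Function.Injective fun i => |permWord σ i| := fun i j h => by
  rcases abs_eq_abs.1 h with h | h
  · exact posB_injective (σ.injective (Subtype.ext h))
  · exact absurd (σ.injective (Subtype.ext (h.trans (hσ (posB j)).symm))) (posB_ne_negB_posB i j)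

theorem IsSigned.ext {σ τ : Equiv.Perm (BSet n)} (hσ : IsSigned σ) (hτ : IsSigned τ)
    (h : permWord σ = permWord τ) : σ = τ := by
  ext x
  have hx := mem_Icc.1 x.2
  rcases lt_trichotomy x.1 0 with hneg | hzero | hpos
  · obtain ⟨i, rfl⟩ : ∃ i : Fin n, x = negB (posB i) :=
      ⟨⟨(-x.1).toNat - 1, by omega⟩, Subtype.ext (by simp [posB, negB]; omega)⟩
    rw [hσ, hτ, ← permWord, ← permWord, h]
  · have hfix : negB x = x := Subtype.ext (by simp [negB, hzero])
    have h1 := hσ x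
    have h2 := hτ x
    rw [hfix] at h1 h2
    omega
  · obtain ⟨i, rfl⟩ : ∃ i : Fin n, x = posB i :=
      ⟨⟨x.1.toNat - 1, by omega⟩, Subtype.ext (by simp [posB]; omega)⟩
    exact congrFun h _

theorem IsSigned.permWord_mul_negSwap {σ : Equiv.Perm (BSet n)} (hσ : IsSigned σ) (j : Fin n) :
    permWord (σ * negSwap (posB j)) = Function.update (permWord σ) j (-permWord σ j) := by
  funext i
  rcases eq_or_ne i j with rfl | hij
  · rw [Function.update_self, permWord, permWord, Equiv.Perm.mul_apply, negSwap,
      Equiv.swap_apply_left, hσ]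
  · rw [Function.update_of_ne hij, permWord, permWord, Equiv.Perm.mul_apply, negSwap,
      Equiv.swap_apply_of_ne_of_ne (posB_injective.ne hij) (posB_ne_negB_posB i j)]

end SignedPerm

section PeakFlip

variable {n : ℕ}

noncomputable def peakFlip (σ : Equiv.Perm (BSet n)) : Equiv.Perm (BSet n) :=
  if h : (absDescents (permWord σ)).Nonempty then
    σ * negSwap (posB ((absDescents (permWord σ)).min' h))
  else σ

theorem peakFlip_eq_mul_negSwap {σ : Equiv.Perm (BSet n)}
    (h : (absDescents (permWord σ)).Nonempty) :
    peakFlip σ = σ * negSwap (posB ((absDescents (permWord σ)).min' h)) :=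
  dif_pos h

variable {σ : Equiv.Perm (BSet n)} (hσ : IsSigned σ) (h : (absDescents (permWord σ)).Nonempty)
include hσ h

theorem permWord_peakFlip :
    permWord (peakFlip σ) = Function.update (permWord σ) ((absDescents (permWord σ)).min' h)
      (-permWord σ ((absDescents (permWord σ)).min' h)) := by
  rw [peakFlip_eq_mul_negSwap h, hσ.permWord_mul_negSwap]

theorem absDescents_permWord_peakFlip :
    absDescents (permWord (peakFlip σ)) = absDescents (permWord σ) := by
  refine absDescents_congr fun i => ?_
  rw [permWord_peakFlip hσ h, Function.update_apply]
  split_ifs with hi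
  · rw [hi, abs_neg]
  · rfl

theorem IsSigned.peakFlip : IsSigned (peakFlip σ) := by
  rw [peakFlip_eq_mul_negSwap h]
  exact hσ.mul (isSigned_negSwap _)

theorem peakFlip_peakFlip : peakFlip (peakFlip σ) = σ := by
  have h' := absDescents_permWord_peakFlip hσ h
  have hmin : (absDescents (permWord (peakFlip σ))).min' (h'.symm ▸ h) =
      (absDescents (permWord σ)).min' h := by
    simp only [h']
  rw [peakFlip_eq_mul_negSwap (h'.symm ▸ h), hmin, peakFlip_eq_mul_negSwap h, mul_assoc,
    negSwap_mul_self, mul_one]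

theorem descB_peakFlip : descB (peakFlip σ) = descB σ := by
  have hmin := (absDescents (permWord σ)).min'_mem h
  rw [descB_eq_descCount_permWord, descB_eq_descCount_permWord, permWord_peakFlip hσ h]
  exact descCount_update_neg_of_mem_absDescents hσ.permWord_ne_zero hσ.abs_permWord_injective
    hmin fun i hi hmem => lt_irrefl i ((lt_min'_iff _ h).1 hi i hmem)

theorem neg_one_pow_negCount_peakFlip :
    (-1 : ℤ) ^ negCount (peakFlip σ) = -(-1) ^ negCount σ := by
  rw [negCount_eq_card_permWord_neg, negCount_eq_card_permWord_neg, permWord_peakFlip hσ h]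
  exact neg_one_pow_card_filter_update_neg _ (hσ.permWord_ne_zero _)

end PeakFlip

section SignFlip

variable {n : ℕ}

noncomputable def signFlip (s : Finset (Fin n)) : Equiv.Perm (BSet n) :=
  Function.Involutive.toPerm
    (fun x => if |x.1| ∈ s.image (fun i : Fin n => ((i : ℕ) : ℤ) + 1) then negB x else x)
    fun x => by
      have habs : |(negB x).1| = |x.1| := abs_neg _
      by_cases hx : |x.1| ∈ s.image (fun i : Fin n => ((i : ℕ) : ℤ) + 1) <;>
        simp only [hx, habs, if_true, if_false, negB_involutive x]

theorem signFlip_apply (s : Finset (Fin n)) (x : BSet n) :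
    signFlip s x = if |x.1| ∈ s.image (fun i : Fin n => ((i : ℕ) : ℤ) + 1) then negB x else x :=
  rfl

theorem permWord_signFlip (s : Finset (Fin n)) (i : Fin n) :
    permWord (signFlip s) i = if i ∈ s then -((i : ℤ) + 1) else (i : ℤ) + 1 := by
  have hmem : |(posB i).1| ∈ s.image (fun i : Fin n => ((i : ℕ) : ℤ) + 1) ↔ i ∈ s := by
    simp [posB, abs_of_pos (show (0 : ℤ) < i + 1 by positivity), Fin.val_inj]
  rw [permWord, signFlip_apply]
  simp only [hmem]
  split_ifs <;> rfl

theorem isSigned_signFlip (s : Finset (Fin n)) : IsSigned (signFlip s) := fun x => by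
  have habs : |(negB x).1| = |x.1| := abs_neg _
  rw [signFlip_apply, signFlip_apply, habs]
  split_ifs <;> rfl

theorem abs_permWord_signFlip (s : Finset (Fin n)) (i : Fin n) :
    |permWord (signFlip s) i| = i + 1 := by
  rw [permWord_signFlip]
  split_ifs <;> simp only [abs_neg, abs_of_pos (show (0 : ℤ) < i + 1 by positivity)]

theorem filter_permWord_signFlip_neg (s : Finset (Fin n)) :
    ({i | permWord (signFlip s) i < 0} : Finset (Fin n)) = s := by
  ext i
  simp only [mem_filter, mem_univ, true_and, permWord_signFlip]
  split_ifs with hi <;> simp only [hi, iff_true, iff_false, not_lt] <;> omega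

end SignFlip

section Count

variable {n : ℕ}

noncomputable def signedWithDescents (n k : ℕ) : Finset (Equiv.Perm (BSet n)) :=
  {σ | IsSigned σ ∧ descB σ = k}

@[simp]
theorem mem_signedWithDescents {k : ℕ} {σ : Equiv.Perm (BSet n)} :
    σ ∈ signedWithDescents n k ↔ IsSigned σ ∧ descB σ = k := by
  simp [signedWithDescents]

theorem eulerianD_sub_eulerianDt_eq_sum (n k : ℕ) :
    (eulerianD n k : ℤ) - eulerianDt n k = ∑ σ ∈ signedWithDescents n k, (-1) ^ negCount σ := by
  rw [sum_neg_one_pow_eq_card_filter_even_sub, eulerianD, eulerianDt, Fintype.card_subtype,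
    Fintype.card_subtype, signedWithDescents, filter_filter, filter_filter]
  congr 3 <;> ext σ <;> simp only [mem_filter] <;> tauto

theorem IsSigned.absDescents_eq_empty_iff {σ : Equiv.Perm (BSet n)} (hσ : IsSigned σ) :
    absDescents (permWord σ) = ∅ ↔ ∀ i : Fin n, |permWord σ i| = i + 1 :=
  _root_.absDescents_eq_empty_iff hσ.permWord_ne_zero (abs_permWord_le σ) hσ.abs_permWord_injective

theorem sum_filter_absDescents_nonempty (k : ℕ) :
    ∑ σ ∈ signedWithDescents n k with (absDescents (permWord σ)).Nonempty,
      (-1 : ℤ) ^ negCount σ = 0 := by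
  refine sum_involution (fun σ _ => peakFlip σ) (fun σ hσ => ?_) (fun σ hσ _ hfix => ?_)
    (fun σ hσ => ?_) (fun σ hσ => ?_) <;>
    obtain ⟨⟨hs, hk⟩, hne⟩ := by simpa only [mem_filter, mem_signedWithDescents] using hσ
  · rw [neg_one_pow_negCount_peakFlip hs hne, add_neg_cancel]
  · have := neg_one_pow_negCount_peakFlip hs hne
    rw [hfix, CharZero.eq_neg_self_iff] at this
    exact pow_ne_zero _ (by norm_num) this
  · simp only [mem_filter, mem_signedWithDescents]
    exact ⟨⟨hs.peakFlip hne, (descB_peakFlip hs hne).trans hk⟩,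
      (absDescents_permWord_peakFlip hs hne).symm ▸ hne⟩
  · exact peakFlip_peakFlip hs hne

theorem IsSigned.descB_eq_negCount {σ : Equiv.Perm (BSet n)} (hσ : IsSigned σ)
    (h : absDescents (permWord σ) = ∅) : descB σ = negCount σ :=
  descCount_eq_card_neg (hσ.absDescents_eq_empty_iff.1 h)

theorem card_filter_absDescents_eq_empty (k : ℕ) :
    #{σ ∈ signedWithDescents n k | absDescents (permWord σ) = ∅} = n.choose k := by
  have mem : ∀ σ, σ ∈ {σ ∈ signedWithDescents n k | absDescents (permWord σ) = ∅} ↔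
      IsSigned σ ∧ descB σ = k ∧ absDescents (permWord σ) = ∅ := fun σ => by
    simp only [mem_filter, mem_signedWithDescents, and_assoc]
  rw [show n.choose k = #(powersetCard k (univ : Finset (Fin n))) by simp]
  refine card_nbij' (fun σ => ({i | permWord σ i < 0} : Finset (Fin n))) signFlip
    (fun σ hσ => ?_) (fun s hs => ?_) (fun σ hσ => ?_) (fun s _ => filter_permWord_signFlip_neg s)
  · obtain ⟨hs, hk, hempty⟩ := (mem σ).1 hσ
    exact mem_powersetCard.2 ⟨subset_univ _, (hs.descB_eq_negCount hempty).symm.trans hk⟩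
  · have hs : #s = k := (mem_powersetCard.1 hs).2
    have hempty : absDescents (permWord (signFlip s)) = ∅ :=
      (isSigned_signFlip s).absDescents_eq_empty_iff.2 (abs_permWord_signFlip s)
    refine (mem _).2 ⟨isSigned_signFlip s, ?_, hempty⟩
    rw [(isSigned_signFlip s).descB_eq_negCount hempty, negCount_eq_card_permWord_neg,
      filter_permWord_signFlip_neg, hs]
  · obtain ⟨hs, -, hempty⟩ := (mem σ).1 hσ
    refine (isSigned_signFlip _).ext hs (funext fun i => ?_)
    have habs := hs.absDescents_eq_empty_iff.1 hempty i
    simp only [permWord_signFlip, mem_filter, mem_univ, true_and]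
    split_ifs with hneg
    · rw [abs_of_neg hneg] at habs
      omega
    · rw [abs_of_nonneg (not_lt.1 hneg)] at habs
      omega

end Count

theorem stmt8_general (n k : ℕ) :
    (eulerianD n k : ℤ) - (eulerianDt n k : ℤ) = (-1) ^ k * (n.choose k : ℤ) := by
  rw [eulerianD_sub_eulerianDt_eq_sum,
    ← sum_filter_add_sum_filter_not _ fun σ => (absDescents (permWord σ)).Nonempty,
    sum_filter_absDescents_nonempty, zero_add]
  simp only [not_nonempty_iff_eq_empty]
  have hsign : ∀ σ ∈ {σ ∈ signedWithDescents n k | absDescents (permWord σ) = ∅},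
      (-1 : ℤ) ^ negCount σ = (-1) ^ k := fun σ hσ => by
    obtain ⟨⟨hs, hk⟩, hempty⟩ := by simpa only [mem_filter, mem_signedWithDescents] using hσ
    rw [← hs.descB_eq_negCount hempty, hk]
  rw [sum_congr rfl hsign, sum_const, card_filter_absDescents_eq_empty, nsmul_eq_mul, mul_comm]

theorem stmt8 (n k : ℕ) (h : k ≤ n) :
    (eulerianD n k : ℤ) - (eulerianDt n k : ℤ) = (-1) ^ k * (n.choose k : ℤ) :=
  stmt8_general n k
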